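/- Let X be the vector field on ℝ⁵ given by X(x₁,y₁,x₂,y₂,z) = (αx₁ + γx₂, 2αy₁ + γy₂, −γx₁ + αx₂, 2αy₂ − γy₁, 2αz) and let V(x₁,y₁,x₂,y₂,z) = (y₁, x₁z, y₂, x₂z, −(x₁y₁+x₂y₂)) be the Maxwell-Bloch vector field. Then the Lie bracket satisfies [X, V] = αV, i.e., X is a conformal symmetry of V with conformal factor α; in particular, for α = 0, X commutes with V. -/
import Mathlib


/-- The Maxwell-Bloch vector field `V = (y₁, x₁z, y₂, x₂z, −(x₁y₁ + x₂y₂))`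
on ℝ⁵ with coordinates `u = (x₁, y₁, x₂, y₂, z)`. -/
noncomputable def mbV (u : Fin 5 → ℝ) : Fin 5 → ℝ :=
  ![u 1, u 0 * u 4, u 3, u 2 * u 4, -(u 0 * u 1 + u 2 * u 3)]

/-- The symmetry vector field
`X = (αx₁ + γx₂, 2αy₁ + γy₂, −γx₁ + αx₂, 2αy₂ − γy₁, 2αz)`. -/
noncomputable def mbX (α γ : ℝ) (u : Fin 5 → ℝ) : Fin 5 → ℝ :=
  ![α * u 0 + γ * u 2, 2*α * u 1 + γ * u 3, -γ * u 0 + α * u 2,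
    2*α * u 3 - γ * u 1, 2*α * u 4]

/-- `X` is a conformal symmetry of the Maxwell-Bloch vector field `V`:
`[X, V] = DV·X − DX·V = α V`. In particular, for `α = 0`, `X` commutes with `V`. -/
theorem conformal_symmetry (α γ : ℝ) :
    ∀ u : Fin 5 → ℝ,
      fderiv ℝ mbV u (mbX α γ u) - fderiv ℝ (mbX α γ) u (mbV u) = α • mbV u := by
  intro u
  set P : Fin 5 → ((Fin 5 → ℝ) →L[ℝ] ℝ) := fun i => ContinuousLinearMap.proj i with hP
  have hV : HasFDerivAt mbV
      (ContinuousLinearMap.pi ![P 1,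
        u 0 • P 4 + u 4 • P 0,
        P 3,
        u 2 • P 4 + u 4 • P 2,
        -(u 0 • P 1 + u 1 • P 0 + (u 2 • P 3 + u 3 • P 2))]) u := by
    rw [hasFDerivAt_pi]
    intro i
    fin_cases i <;> simp only [mbV, Matrix.cons_val_zero, Matrix.cons_val_one,
      Matrix.head_cons, Matrix.cons_val_two, Matrix.tail_cons, Matrix.cons_val_three,
      Matrix.cons_val_four, Fin.isValue]
    · exact hasFDerivAt_apply 1 u
    · exact (hasFDerivAt_apply 0 u).mul (hasFDerivAt_apply 4 u)
    · exact hasFDerivAt_apply 3 u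
    · exact (hasFDerivAt_apply 2 u).mul (hasFDerivAt_apply 4 u)
    · exact (((hasFDerivAt_apply 0 u).mul (hasFDerivAt_apply 1 u)).add
        ((hasFDerivAt_apply 2 u).mul (hasFDerivAt_apply 3 u))).neg
  have hX : HasFDerivAt (mbX α γ)
      (ContinuousLinearMap.pi ![α • P 0 + γ • P 2,
        (2*α) • P 1 + γ • P 3,
        -γ • P 0 + α • P 2,
        (2*α) • P 3 - γ • P 1,
        (2*α) • P 4]) u := by
    rw [hasFDerivAt_pi]
    intro i
    fin_cases i <;> simp only [mbX, Matrix.cons_val_zero, Matrix.cons_val_one,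
      Matrix.head_cons, Matrix.cons_val_two, Matrix.tail_cons, Matrix.cons_val_three,
      Matrix.cons_val_four, Fin.isValue]
    · exact ((hasFDerivAt_apply 0 u).const_mul α).add ((hasFDerivAt_apply 2 u).const_mul γ)
    · exact ((hasFDerivAt_apply 1 u).const_mul (2*α)).add ((hasFDerivAt_apply 3 u).const_mul γ)
    · exact ((hasFDerivAt_apply 0 u).const_mul (-γ)).add ((hasFDerivAt_apply 2 u).const_mul α)
    · exact ((hasFDerivAt_apply 3 u).const_mul (2*α)).sub ((hasFDerivAt_apply 1 u).const_mul γ)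
    · exact (hasFDerivAt_apply 4 u).const_mul (2*α)
  rw [hV.fderiv, hX.fderiv]
  funext i
  fin_cases i <;>
    simp only [mbV, mbX, hP, Pi.sub_apply, Pi.smul_apply, smul_eq_mul,
      ContinuousLinearMap.pi_apply, ContinuousLinearMap.add_apply,
      ContinuousLinearMap.sub_apply, ContinuousLinearMap.neg_apply,
      ContinuousLinearMap.smul_apply, ContinuousLinearMap.proj_apply,
      Matrix.cons_val_zero, Matrix.cons_val_one, Matrix.head_cons,
      Matrix.cons_val_two, Matrix.tail_cons, Matrix.cons_val_three,
      Matrix.cons_val_four, Fin.isValue, Fin.reduceFinMk, Fin.zero_eta, Fin.mk_one] <;> ring
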